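/- Fix k ≥ 1 and ℓ ≥ 0, and let B ⊂ ℝ^k be a nondegenerate closed axis-parallel box. Then the space E(B, ℓ) of ℓ-tuples of pairwise disjoint nondegenerate closed axis-parallel sub-boxes of B is homotopy equivalent to the ordered configuration space of ℓ points in the interior of B, i.e., to the subspace {f : Fin ℓ → ℝ^k : f injective and f(j) ∈ int(B) for all j} of (ℝ^k)^ℓ. -/
import Mathlib

/-- The space `E(B, ℓ)` of `ℓ`-tuples of pairwise disjoint nondegenerate closed
axis-parallel sub-boxes of the box `B = Icc a b ⊆ ℝ^k`, parametrized by corner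
coordinates, as a subspace of `((ℝ^k)²)^ℓ`. -/
def BoxTuples (k ℓ : ℕ) (a b : Fin k → ℝ) :
    Set (Fin ℓ → (Fin k → ℝ) × (Fin k → ℝ)) :=
  {t | (∀ j, ∀ i, (t j).1 i < (t j).2 i) ∧
       (∀ j, Set.Icc (t j).1 (t j).2 ⊆ Set.Icc a b) ∧
       ∀ j j', j ≠ j' →
         Disjoint (Set.Icc (t j).1 (t j).2) (Set.Icc (t j').1 (t j').2)}

namespace S15

variable {k ℓ : ℕ} (a b : Fin k → ℝ)

/-- The ordered configuration space of `ℓ` points in the interior of `Icc a b`. -/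
def Config : Set (Fin ℓ → Fin k → ℝ) :=
  {f | Function.Injective f ∧ ∀ j, f j ∈ interior (Set.Icc a b)}

/-- The center map. -/
noncomputable def ctr (t : Fin ℓ → (Fin k → ℝ) × (Fin k → ℝ)) : Fin ℓ → Fin k → ℝ :=
  fun j i => ((t j).1 i + (t j).2 i) / 2

noncomputable def phi (f : Fin ℓ → Fin k → ℝ) : Option ((Fin ℓ × Fin k) ⊕ (Fin ℓ × Fin ℓ)) → ℝ
  | none => 1
  | some (.inl (j, i)) => min (f j i - a i) (b i - f j i)
  | some (.inr (j, j')) => if j = j' then 1 else dist (f j) (f j')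

/-- The safe radius for cubes around the points of a configuration. -/
noncomputable def rad (f : Fin ℓ → Fin k → ℝ) : ℝ :=
  (Finset.univ.inf' Finset.univ_nonempty (phi a b f)) / 3

@[fun_prop]
lemma cont_ctr : Continuous (ctr (k := k) (ℓ := ℓ)) := by
  unfold ctr; fun_prop

@[fun_prop]
lemma cont_rad : Continuous (rad (k := k) (ℓ := ℓ) a b) := by
  unfold rad
  apply Continuous.div_const
  apply Continuous.finset_inf'_apply
  rintro (_ | p) _
  · exact continuous_const
  · rcases p with ⟨j, i⟩ | ⟨j, j'⟩
    · simp only [phi]; fun_prop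
    · simp only [phi]; split_ifs
      · exact continuous_const
      · exact (continuous_apply j).dist (continuous_apply j')

lemma mem_interior_Icc {x : Fin k → ℝ} :
    x ∈ interior (Set.Icc a b) ↔ ∀ i, x i ∈ Set.Ioo (a i) (b i) := by
  rw [← Set.pi_univ_Icc, interior_pi_set Set.finite_univ]
  simp [Set.mem_pi]

lemma rad_le (f : Fin ℓ → Fin k → ℝ) (p) : rad a b f ≤ phi a b f p / 3 := by
  have := Finset.inf'_le (phi a b f) (Finset.mem_univ p)
  unfold rad; linarith

lemma rad_pos {f : Fin ℓ → Fin k → ℝ} (hf : f ∈ Config a b) : 0 < rad a b f := by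
  have h : ∀ p ∈ (Finset.univ : Finset (Option ((Fin ℓ × Fin k) ⊕ (Fin ℓ × Fin ℓ)))),
      0 < phi a b f p := by
    rintro (_ | p) _
    · norm_num [phi]
    · rcases p with ⟨j, i⟩ | ⟨j, j'⟩
      · have := (mem_interior_Icc a b).1 (hf.2 j) i
        simp only [phi, lt_min_iff]
        constructor <;> simp [Set.mem_Ioo] at this <;> linarith [this.1, this.2]
      · by_cases hj : j = j'
        · simp [phi, hj]
        · simp only [phi, if_neg hj]
          exact dist_pos.2 fun h' => hj (hf.1 h')
  have := (Finset.lt_inf'_iff (Finset.univ_nonempty) (a := (0:ℝ))).2 h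
  unfold rad; linarith

lemma cube_subset {f : Fin ℓ → Fin k → ℝ} (hf : f ∈ Config a b) (j : Fin ℓ) {u : ℝ}
    (hu : u ≤ rad a b f) :
    Set.Icc (fun i => f j i - u) (fun i => f j i + u) ⊆ Set.Icc a b := by
  intro x hx
  rw [Set.mem_Icc] at hx ⊢
  constructor <;> intro i
  · have h1 : f j i - u ≤ x i := hx.1 i
    have h2 := rad_le a b f (some (.inl (j, i)))
    simp only [phi] at h2
    have h3 := min_le_left (f j i - a i) (b i - f j i)
    have h4 := (mem_interior_Icc a b).1 (hf.2 j) i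
    simp only [Set.mem_Ioo] at h4
    linarith [h4.1]
  · have h1 : x i ≤ f j i + u := hx.2 i
    have h2 := rad_le a b f (some (.inl (j, i)))
    simp only [phi] at h2
    have h3 := min_le_right (f j i - a i) (b i - f j i)
    have h4 := (mem_interior_Icc a b).1 (hf.2 j) i
    simp only [Set.mem_Ioo] at h4
    linarith [h4.2]

lemma cube_disjoint {f : Fin ℓ → Fin k → ℝ} (hf : f ∈ Config a b) {j j' : Fin ℓ}
    (hjj : j ≠ j') {u v : ℝ} (hu0 : 0 < u) (hu : u ≤ rad a b f)
    (hv0 : 0 < v) (hv : v ≤ rad a b f) :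
    Disjoint (Set.Icc (fun i => f j i - u) (fun i => f j i + u))
             (Set.Icc (fun i => f j' i - v) (fun i => f j' i + v)) := by
  rw [Set.disjoint_left]
  rintro x hx hx'
  rw [Set.mem_Icc] at hx hx'
  have hd : dist (f j) (f j') ≤ u + v := by
    rw [dist_pi_le_iff (by linarith)]
    intro i
    have h1 : f j i - u ≤ x i := hx.1 i
    have h2 : x i ≤ f j i + u := hx.2 i
    have h3 : f j' i - v ≤ x i := hx'.1 i
    have h4 : x i ≤ f j' i + v := hx'.2 i
    rw [Real.dist_eq, abs_le]
    constructor <;> linarith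
  have h5 := rad_le a b f (some (.inr (j, j')))
  simp only [phi, if_neg hjj] at h5
  have h6 : 0 < rad a b f := lt_of_lt_of_le hu0 hu
  linarith

lemma ctr_mem {t} (ht : t ∈ BoxTuples k ℓ a b) : ctr t ∈ Config a b := by
  obtain ⟨h1, h2, h3⟩ := ht
  have hmem : ∀ j, ctr t j ∈ Set.Icc (t j).1 (t j).2 := by
    intro j
    rw [Set.mem_Icc]
    constructor <;> intro i <;> simp only [ctr] <;> linarith [h1 j i]
  constructor
  · intro j j' heq
    by_contra hne
    exact Set.disjoint_left.1 (h3 j j' hne) (hmem j) (heq ▸ hmem j')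
  · intro j
    rw [mem_interior_Icc]
    intro i
    have hc : (t j).1 ∈ Set.Icc a b :=
      h2 j (Set.mem_Icc.2 ⟨le_rfl, fun i => (h1 j i).le⟩)
    have hd : (t j).2 ∈ Set.Icc a b :=
      h2 j (Set.mem_Icc.2 ⟨fun i => (h1 j i).le, le_rfl⟩)
    have hc1 : a i ≤ (t j).1 i := hc.1 i
    have hd1 : (t j).2 i ≤ b i := hd.2 i
    constructor <;> simp only [ctr] <;> linarith [h1 j i]

/-- The map sending a configuration to the tuple of cubes around its points. -/
noncomputable def gmap (f : Fin ℓ → Fin k → ℝ) : Fin ℓ → (Fin k → ℝ) × (Fin k → ℝ) :=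
  fun j => (fun i => f j i - rad a b f, fun i => f j i + rad a b f)

@[fun_prop]
lemma cont_gmap : Continuous (gmap (k := k) (ℓ := ℓ) a b) := by
  unfold gmap; fun_prop

lemma gmap_mem {f} (hf : f ∈ Config a b) : gmap a b f ∈ BoxTuples k ℓ a b := by
  have hr := rad_pos a b hf
  refine ⟨fun j i => by simp only [gmap]; linarith, fun j => ?_, fun j j' hjj => ?_⟩
  · exact cube_subset a b hf j le_rfl
  · exact cube_disjoint a b hf hjj hr le_rfl hr le_rfl

section withk

variable [Nonempty (Fin k)]

/-- Capped radius for box `j` of the tuple `t` : at most the safe radius of the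
configuration of centers, and at most every half-width of box `j`. -/
noncomputable def rho (t : Fin ℓ → (Fin k → ℝ) × (Fin k → ℝ)) (j : Fin ℓ) : ℝ :=
  min (rad a b (ctr t))
    (Finset.univ.inf' Finset.univ_nonempty fun i => ((t j).2 i - (t j).1 i) / 2)

@[fun_prop]
lemma cont_rho (j : Fin ℓ) : Continuous fun t => rho (k := k) a b t j := by
  unfold rho
  apply Continuous.min
  · fun_prop
  · apply Continuous.finset_inf'_apply
    intro i _
    fun_prop

lemma rho_le_rad (t) (j : Fin ℓ) : rho a b t j ≤ rad a b (ctr t) := min_le_left _ _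

lemma rho_le_hw (t) (j : Fin ℓ) (i : Fin k) :
    rho a b t j ≤ ((t j).2 i - (t j).1 i) / 2 :=
  le_trans (min_le_right _ _) (Finset.inf'_le _ (Finset.mem_univ i))

lemma rho_pos {t} (ht : t ∈ BoxTuples k ℓ a b) (j : Fin ℓ) : 0 < rho a b t j := by
  apply lt_min (rad_pos a b (ctr_mem a b ht))
  rw [Finset.lt_inf'_iff]
  intro i _
  have := ht.1 j i
  linarith

/-- Stage A of the homotopy: linearly shrink each box, within itself, to the concentric
cube of radius `rho`. -/
noncomputable def Amap (s : ℝ) (t : Fin ℓ → (Fin k → ℝ) × (Fin k → ℝ)) :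
    Fin ℓ → (Fin k → ℝ) × (Fin k → ℝ) := fun j =>
  (fun i => (1 - s) * (t j).1 i + s * (ctr t j i - rho a b t j),
   fun i => (1 - s) * (t j).2 i + s * (ctr t j i + rho a b t j))

/-- Stage B of the homotopy: linearly deform the radius from `rho` to `rad`. -/
noncomputable def Bmap (s : ℝ) (t : Fin ℓ → (Fin k → ℝ) × (Fin k → ℝ)) :
    Fin ℓ → (Fin k → ℝ) × (Fin k → ℝ) := fun j =>
  (fun i => ctr t j i - ((1 - s) * rho a b t j + s * rad a b (ctr t)),
   fun i => ctr t j i + ((1 - s) * rho a b t j + s * rad a b (ctr t)))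

@[fun_prop]
lemma cont_Amap : Continuous fun p : ℝ × (Fin ℓ → (Fin k → ℝ) × (Fin k → ℝ)) =>
    Amap (k := k) a b p.1 p.2 := by
  unfold Amap; fun_prop

@[fun_prop]
lemma cont_Bmap : Continuous fun p : ℝ × (Fin ℓ → (Fin k → ℝ) × (Fin k → ℝ)) =>
    Bmap (k := k) a b p.1 p.2 := by
  unfold Bmap; fun_prop

lemma Amap_mem {t} (ht : t ∈ BoxTuples k ℓ a b) {s : ℝ} (hs0 : 0 ≤ s) (hs1 : s ≤ 1) :
    Amap a b s t ∈ BoxTuples k ℓ a b := by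
  obtain ⟨h1, h2, h3⟩ := ht
  have hρ : ∀ j, 0 < rho a b t j := rho_pos a b ⟨h1, h2, h3⟩
  have hsub : ∀ j, Set.Icc (Amap a b s t j).1 (Amap a b s t j).2 ⊆
      Set.Icc (t j).1 (t j).2 := by
    intro j
    apply Set.Icc_subset_Icc <;> intro i <;> simp only [Amap, ctr]
    · have hw := rho_le_hw a b t j i
      nlinarith [mul_nonneg hs0 (by linarith :
        (0:ℝ) ≤ ((t j).1 i + (t j).2 i) / 2 - rho a b t j - (t j).1 i)]
    · have hw := rho_le_hw a b t j i
      nlinarith [mul_nonneg hs0 (by linarith :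
        (0:ℝ) ≤ (t j).2 i - (((t j).1 i + (t j).2 i) / 2 + rho a b t j))]
  refine ⟨fun j i => ?_, fun j => (hsub j).trans (h2 j),
    fun j j' h => (h3 j j' h).mono (hsub j) (hsub j')⟩
  simp only [Amap]
  rcases eq_or_lt_of_le hs1 with h | h
  · subst h; norm_num; linarith [hρ j]
  · nlinarith [mul_pos (by linarith : (0:ℝ) < 1 - s) (by linarith [h1 j i] :
      (0:ℝ) < (t j).2 i - (t j).1 i), mul_nonneg hs0 (hρ j).le]

lemma convex_pos {s x y : ℝ} (hs0 : 0 ≤ s) (hx : 0 < x) (hy : 0 < y) :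
    0 < (1 - s) * x + s * y ∨ 1 < s := by
  rcases le_or_gt s 1 with h | h
  · left
    rcases eq_or_lt_of_le hs0 with h' | h'
    · rw [← h']; ring_nf; linarith
    · nlinarith [mul_pos h' hy, mul_nonneg (by linarith : (0:ℝ) ≤ 1 - s) hx.le]
  · right; exact h

lemma Bmap_mem {t} (ht : t ∈ BoxTuples k ℓ a b) {s : ℝ} (hs0 : 0 ≤ s) (hs1 : s ≤ 1) :
    Bmap a b s t ∈ BoxTuples k ℓ a b := by
  have hc := ctr_mem a b ht
  have hr := rad_pos a b hc
  have hupos : ∀ j, 0 < (1 - s) * rho a b t j + s * rad a b (ctr t) := by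
    intro j
    rcases convex_pos hs0 (rho_pos a b ht j) hr with h | h
    · exact h
    · linarith
  have hule : ∀ j, (1 - s) * rho a b t j + s * rad a b (ctr t) ≤ rad a b (ctr t) := by
    intro j
    have := rho_le_rad a b t j
    nlinarith [mul_nonneg (by linarith : (0:ℝ) ≤ 1 - s)
      (by linarith : (0:ℝ) ≤ rad a b (ctr t) - rho a b t j)]
  refine ⟨fun j i => ?_, fun j => ?_, fun j j' hjj => ?_⟩
  · simp only [Bmap]; linarith [hupos j]
  · exact cube_subset a b hc j (hule j)
  · exact cube_disjoint a b hc hjj (hupos j) (hule j) (hupos j') (hule j')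

lemma Amap_zero (t : Fin ℓ → (Fin k → ℝ) × (Fin k → ℝ)) : Amap a b 0 t = t := by
  funext j
  refine Prod.ext (funext fun i => ?_) (funext fun i => ?_) <;> simp [Amap]

lemma Amap_one_eq_Bmap_zero (t : Fin ℓ → (Fin k → ℝ) × (Fin k → ℝ)) :
    Amap a b 1 t = Bmap a b 0 t := by
  funext j
  refine Prod.ext (funext fun i => ?_) (funext fun i => ?_) <;> simp [Amap, Bmap]

lemma Bmap_one (t : Fin ℓ → (Fin k → ℝ) × (Fin k → ℝ)) :
    Bmap a b 1 t = gmap a b (ctr t) := by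
  funext j
  refine Prod.ext (funext fun i => ?_) (funext fun i => ?_) <;> simp [Bmap, gmap]

end withk

end S15

open S15 in
/-- The space `E(B, ℓ)` is homotopy equivalent to the ordered configuration space
of `ℓ` points in the interior of `B`. -/
theorem statement15 (k ℓ : ℕ) (hk : 1 ≤ k) (a b : Fin k → ℝ)
    (hab : ∀ i, a i < b i) :
    Nonempty (ContinuousMap.HomotopyEquiv
      (BoxTuples k ℓ a b)
      ({f : Fin ℓ → (Fin k → ℝ) |
        Function.Injective f ∧ ∀ j, f j ∈ interior (Set.Icc a b)})) := by
  haveI : Nonempty (Fin k) := ⟨⟨0, hk⟩⟩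
  -- the two continuous maps
  set cmap : C(BoxTuples k ℓ a b, Config (ℓ := ℓ) a b) :=
    ⟨fun t => ⟨ctr t.1, ctr_mem a b t.2⟩, by
      apply Continuous.subtype_mk
      exact (cont_ctr).comp continuous_subtype_val⟩ with hcmap
  set gC : C(Config (ℓ := ℓ) a b, BoxTuples k ℓ a b) :=
    ⟨fun f => ⟨gmap a b f.1, gmap_mem a b f.2⟩, by
      apply Continuous.subtype_mk
      exact (cont_gmap a b).comp continuous_subtype_val⟩ with hgC
  -- the intermediate map (endpoint of stage A)
  set mid : C(BoxTuples k ℓ a b, BoxTuples k ℓ a b) :=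
    ⟨fun t => ⟨Amap a b 1 t.1, Amap_mem a b t.2 zero_le_one le_rfl⟩, by
      apply Continuous.subtype_mk
      exact (cont_Amap a b).comp (continuous_const.prodMk continuous_subtype_val)⟩ with hmid
  have HA : (ContinuousMap.id (BoxTuples k ℓ a b)).Homotopy mid :=
    { toFun := fun p => ⟨Amap a b (p.1 : ℝ) p.2.1,
        Amap_mem a b p.2.2 p.1.2.1 p.1.2.2⟩
      continuous_toFun := by
        apply Continuous.subtype_mk
        exact (cont_Amap a b).comp
          ((continuous_subtype_val.comp continuous_fst).prodMk
            (continuous_subtype_val.comp continuous_snd))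
      map_zero_left := fun t => Subtype.ext (by simp [Amap_zero])
      map_one_left := fun t => Subtype.ext (by simp [hmid]) }
  have HB : mid.Homotopy (gC.comp cmap) :=
    { toFun := fun p => ⟨Bmap a b (p.1 : ℝ) p.2.1,
        Bmap_mem a b p.2.2 p.1.2.1 p.1.2.2⟩
      continuous_toFun := by
        apply Continuous.subtype_mk
        exact (cont_Bmap a b).comp
          ((continuous_subtype_val.comp continuous_fst).prodMk
            (continuous_subtype_val.comp continuous_snd))
      map_zero_left := fun t => Subtype.ext (by
        simp [hmid, Amap_one_eq_Bmap_zero])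
      map_one_left := fun t => Subtype.ext (by
        simp [hgC, hcmap, ContinuousMap.comp, Bmap_one]) }
  have hright : cmap.comp gC = ContinuousMap.id _ := by
    apply ContinuousMap.ext
    intro f
    apply Subtype.ext
    funext j i
    simp only [ContinuousMap.comp_apply, hcmap, hgC, ContinuousMap.coe_mk,
      ContinuousMap.id_apply]
    show ((gmap a b f.1 j).1 i + (gmap a b f.1 j).2 i) / 2 = f.1 j i
    simp only [gmap]
    ring
  exact ⟨{ toFun := cmap
           invFun := gC
           left_inv := ⟨(HA.trans HB).symm⟩
           right_inv := hright ▸ ⟨ContinuousMap.Homotopy.refl _⟩ }⟩
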